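/- Crossing relation for the boundary functions g_k: let θ, ε ∈ {+1, −1} and ζ₁, …, ζ_N ∈ ℂ^× with ζ_{N+1−k} = ε ζ_k for all k. Define g_k(λ) = ζ_k (2λ + ħ(ρ+θ))/(2λ + ħρ) for 1 ≤ k ≤ N/2; g_k(λ) = ζ_k if N is odd and k = (N+1)/2; and g_k(λ) = ζ_k (2λ + ħ(ρ − θε))/(2λ + ħρ) for N/2 + 1 ≤ k ≤ N. Then for every 1 ≤ k ≤ N and every λ ∈ ℂ with 2λ + ħρ ≠ 0, 2λ + ħ(ρ−θ) ≠ 0 and 2(−λ−ħρ) + ħρ ≠ 0: g_k(λ) = [(2λε + ħ(ρε − θ)) / (2λ + ħ(ρ − θ))] · g_{N+1−k}(−λ − ħρ). -/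
import Mathlib


open Finset

noncomputable section

/-- The boundary functions `g_k(λ)` (indices `1 ≤ k ≤ N`):
`g_k(λ) = ζ_k (2λ+ħ(ρ+θ))/(2λ+ħρ)` for `k ≤ N/2`, `g_k = ζ_k` for `N` odd and
`k = (N+1)/2`, and `g_k(λ) = ζ_k (2λ+ħ(ρ−θε))/(2λ+ħρ)` for `k ≥ N/2 + 1`. -/
def gfun (N : ℕ) (hbar ρ θ ε : ℂ) (ζ : ℕ → ℂ) (k : ℕ) (lam : ℂ) : ℂ :=
  if 2 * k ≤ N then ζ k * (2 * lam + hbar * (ρ + θ)) / (2 * lam + hbar * ρ)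
  else if 2 * k = N + 1 then ζ k
  else ζ k * (2 * lam + hbar * (ρ - θ * ε)) / (2 * lam + hbar * ρ)

lemma gfun_aux {a b c d e f : ℂ} (hb : b ≠ 0) (hd : d ≠ 0) (hf : f ≠ 0)
    (h : a * (d * f) = c * e * b) : a / b = c / d * (e / f) := by
  rw [div_mul_div_comm, div_eq_div_iff hb (mul_ne_zero hd hf)]
  exact h

/-- crossing relation for the boundary functions:
`g_k(λ) = [(2λε + ħ(ρε − θ))/(2λ + ħ(ρ − θ))] g_{N+1−k}(−λ − ħρ)`. -/
theorem gfun_crossing (N : ℕ) (hN : 2 ≤ N) (hbar : ℂ) (hhbar : hbar ≠ 0)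
    (ρ θ ε : ℂ) (hθ : θ = 1 ∨ θ = -1) (hε : ε = 1 ∨ ε = -1)
    (hodd : N % 2 = 1 → ε = 1 ∧ θ = 1)
    (ζ : ℕ → ℂ) (hζ0 : ∀ k ∈ Icc 1 N, ζ k ≠ 0)
    (hζ : ∀ k ∈ Icc 1 N, ζ (N + 1 - k) = ε * ζ k)
    (lam : ℂ) (h1 : 2 * lam + hbar * ρ ≠ 0) (h2 : 2 * lam + hbar * (ρ - θ) ≠ 0)
    (h3 : 2 * (-lam - hbar * ρ) + hbar * ρ ≠ 0) :
    ∀ k ∈ Icc 1 N,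
      gfun N hbar ρ θ ε ζ k lam =
        (2 * lam * ε + hbar * (ρ * ε - θ)) / (2 * lam + hbar * (ρ - θ)) *
          gfun N hbar ρ θ ε ζ (N + 1 - k) (-lam - hbar * ρ) := by
  intro k hk
  simp only [mem_Icc] at hk
  obtain ⟨hk1, hk2⟩ := hk
  have hzk : ζ (N + 1 - k) = ε * ζ k := hζ k (by simp [mem_Icc]; omega)
  unfold gfun
  by_cases hA : 2 * k ≤ N
  · have hB1 : ¬ (2 * (N + 1 - k) ≤ N) := by omega
    have hB2 : ¬ (2 * (N + 1 - k) = N + 1) := by omega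
    rw [if_pos hA, if_neg hB1, if_neg hB2, hzk, div_mul_div_comm,
      div_eq_div_iff h1 (mul_ne_zero h2 h3)]
    rcases hε with rfl | rfl <;> rcases hθ with rfl | rfl <;> ring
  · by_cases hM : 2 * k = N + 1
    · have hNo : N % 2 = 1 := by omega
      obtain ⟨rfl, rfl⟩ := hodd hNo
      have hkk : N + 1 - k = k := by omega
      rw [if_neg hA, if_pos hM, hkk, if_neg hA, if_pos hM]
      field_simp [h2]
    · have hB1 : 2 * (N + 1 - k) ≤ N := by omega
      rw [if_neg hA, if_neg hM, if_pos hB1, hzk, div_mul_div_comm,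
        div_eq_div_iff h1 (mul_ne_zero h2 h3)]
      rcases hε with rfl | rfl <;> rcases hθ with rfl | rfl <;> ring
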